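/- arXiv:1702.03749 — 2 statements merged into one kernel-verified Lean document; each statement's English description precedes it below -/
import Mathlib

section
/- Let N ≥ 2 and let Ω ⊂ ℝ^N be a bounded open set with ℋ^{N−1}(∂Ω) < +∞. Let u ∈ L^∞(Ω) with |Du|(Ω) < +∞, extended to zero outside Ω. Then u ∈ BV(ℝ^N). -/
/-!
Cover `∂Ω` by finitely many balls `B(cᵢ, rᵢ)` with `rᵢ < ε` and `∑ rᵢ ^ (N - 1) ≤ M`, where `M`
does not depend on `ε`: this is where `ℋ^{N-1}(∂Ω) < ∞` and the compactness of `∂Ω` enter. Let `η`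
be a product of cutoffs vanishing on the balls. For a test field `g` on `ℝ^N`, `η • g` extended
by zero is a test field on `Ω`, so `∫_Ω u div (η g) ≤ |Du|(Ω)`. The difference
`div g - div (η g) = (1 - η) div g - ∇η · g` is supported in `⋃ B(cᵢ, 2rᵢ)` and bounded there by
`‖div g‖_∞ + C / rᵢ`, so against `u ∈ L^∞` it costs at most
`‖u‖_∞ ∑ (‖div g‖_∞ + C / rᵢ) |B(cᵢ, 2rᵢ)| ≲ ‖u‖_∞ (ε ‖div g‖_∞ + C) M`.
Letting `ε → 0` bounds `|Du|(ℝ^N)` by `|Du|(Ω) + c ‖u‖_∞`.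
-/

open MeasureTheory Metric Set Filter Topology ENNReal

noncomputable section

abbrev RN (N : ℕ) := EuclideanSpace ℝ (Fin N)

/-- `E` has density `t` at `x`. -/
def HasDensityAt {N : ℕ} (E : Set (RN N)) (t : ℝ) (x : RN N) : Prop :=
  Tendsto (fun ρ : ℝ => volume (E ∩ ball x ρ) / volume (ball x ρ))
    (𝓝[>] 0) (𝓝 (ENNReal.ofReal t))

/-- The set of points where `E` has density `t`. -/
def densityPts {N : ℕ} (E : Set (RN N)) (t : ℝ) : Set (RN N) := {x | HasDensityAt E t x}

/-- The essential boundary `∂* E`. -/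
def essBoundary {N : ℕ} (E : Set (RN N)) : Set (RN N) :=
  univ \ (densityPts E 0 ∪ densityPts E 1)

/-- Approximate upper limit `v⁺(x)`. -/
def apUpper {N : ℕ} (v : RN N → ℝ) (x : RN N) : EReal :=
  sInf ((fun t : ℝ => (t : EReal)) '' {t | HasDensityAt {y | v y > t} 0 x})

/-- Approximate lower limit `v⁻(x)`. -/
def apLower {N : ℕ} (v : RN N → ℝ) (x : RN N) : EReal :=
  sSup ((fun t : ℝ => (t : EReal)) '' {t | HasDensityAt {y | v y > t} 1 x})

/-- The approximate discontinuity set `S(v)`. -/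
def apDiscont {N : ℕ} (v : RN N → ℝ) : Set (RN N) := {x | apUpper v x ≠ apLower v x}

/-- Conversion from `EReal` to `ℝ≥0∞`, sending `⊤` to `⊤` and negatives to `0`. -/
def erealToENNReal (x : EReal) : ℝ≥0∞ :=
  if x = ⊤ then ⊤ else ENNReal.ofReal x.toReal

/-- `|v⁺(x) - v⁻(x)|` as an extended nonnegative real. -/
def jumpE {N : ℕ} (v : RN N → ℝ) (x : RN N) : ℝ≥0∞ :=
  erealToENNReal (apUpper v x - apLower v x) ⊔ erealToENNReal (apLower v x - apUpper v x)

/-- Divergence of a vector field. -/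
def divg {N : ℕ} (g : RN N → RN N) (x : RN N) : ℝ :=
  ∑ i, fderiv ℝ g x (EuclideanSpace.single i 1) i

/-- Total variation `|Du|(Ω)`. -/
def totVar {N : ℕ} (u : RN N → ℝ) (Ω : Set (RN N)) : ℝ≥0∞ :=
  ⨆ (g : RN N → RN N) (_ : ContDiff ℝ 1 g) (_ : HasCompactSupport g)
    (_ : tsupport g ⊆ Ω) (_ : ∀ x, ‖g x‖ ≤ 1),
    ENNReal.ofReal (∫ x in Ω, u x * divg g x)

/-- The isoperimetric constant `C(N)`. -/
def isoConst (N : ℕ) : ℝ≥0∞ :=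
  volume (ball (0 : RN N) 1) ^ (((N : ℝ) - 1) / N) /
    μH[(N : ℝ) - 1] (sphere (0 : RN N) 1)

/-- `s` is σ-finite with respect to `μ`. -/
def SigmaFiniteOn {N : ℕ} (μ : Measure (RN N)) (s : Set (RN N)) : Prop :=
  ∃ f : ℕ → Set (RN N), (∀ n, MeasurableSet (f n) ∧ μ (f n) < ⊤) ∧ s = ⋃ n, f n

/-- `v` is the weak (distributional) gradient of `u` on `Ω`. -/
def IsWeakGradOn {N : ℕ} (u : RN N → ℝ) (v : RN N → RN N) (Ω : Set (RN N)) : Prop :=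
  ∀ g : RN N → ℝ, ContDiff ℝ 1 g → HasCompactSupport g → tsupport g ⊆ Ω →
    ∀ i : Fin N, ∫ x in Ω, u x * fderiv ℝ g x (EuclideanSpace.single i 1) =
      -∫ x in Ω, v x i * g x

section Cover

variable {X : Type*} [MetricSpace X] [MeasurableSpace X] [BorelSpace X]

lemma exists_cover_tsum_ediam_rpow_lt (d : ℝ) {s : Set X} {a : ℝ≥0∞} (ha : μH[d] s < a)
    {δ : ℝ≥0∞} (hδ : 0 < δ) :
    ∃ t : ℕ → Set X, s ⊆ ⋃ n, t n ∧ (∀ n, ediam (t n) ≤ δ) ∧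
      ∑' n, ⨆ _ : (t n).Nonempty, ediam (t n) ^ d < a := by
  rw [Measure.hausdorffMeasure_apply] at ha
  simpa only [iInf_lt_iff, exists_prop] using (le_iSup₂_of_le δ hδ le_rfl).trans_lt ha

lemma sum_geometric_mul_pow_le {m : ℕ} (hm : 1 ≤ m) {δ : ℝ} (hδ0 : 0 ≤ δ) (hδ1 : δ ≤ 1)
    (F : Finset ℕ) : ∑ i ∈ F, (δ * (1 / 2) ^ i) ^ m ≤ 2 := by
  have hterm i : (δ * (1 / 2) ^ i) ^ m ≤ (1 / 2) ^ i :=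
    (pow_le_of_le_one (by positivity)
      (mul_le_one₀ hδ1 (by positivity) (pow_le_one₀ (by norm_num) (by norm_num)))
      (by omega)).trans (mul_le_of_le_one_left (by positivity) hδ1)
  calc ∑ i ∈ F, (δ * (1 / 2) ^ i) ^ m ≤ ∑ i ∈ F, (1 / 2 : ℝ) ^ i := F.sum_le_sum fun i _ => hterm i
    _ ≤ ∑' i, (1 / 2 : ℝ) ^ i :=
      summable_geometric_two.sum_le_tsum F fun i _ => by positivity
    _ = 2 := tsum_geometric_two

lemma exists_finite_ball_cover_sum_pow_le [Nonempty X] {m : ℕ} (hm : 1 ≤ m) {s : Set X}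
    (hs : IsCompact s) (hfin : μH[m] s < ⊤) :
    ∃ M : ℝ, ∀ ε > 0, ∃ (F : Finset ℕ) (c : ℕ → X) (r : ℕ → ℝ),
      (∀ i ∈ F, 0 < r i ∧ r i < ε) ∧ s ⊆ ⋃ i ∈ F, ball (c i) (r i) ∧
        ∑ i ∈ F, r i ^ m ≤ M := by
  set H := μH[m] s + 1
  have hH : H ≠ ⊤ := ENNReal.add_ne_top.2 ⟨hfin.ne, ENNReal.one_ne_top⟩
  refine ⟨2 ^ (m - 1) * (H.toReal + 2), fun ε hε => ?_⟩
  obtain ⟨t, hst, hdiam, hsum⟩ := exists_cover_tsum_ediam_rpow_lt (m : ℝ)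
    (ENNReal.lt_add_right hfin.ne one_ne_zero) (ENNReal.ofReal_pos.2 (half_pos hε))
  have hdiam_ne n : ediam (t n) ≠ ⊤ := ne_top_of_le_ne_top ENNReal.ofReal_ne_top (hdiam n)
  -- Enlarge each `t n` to an open ball; the geometric slack `b n` keeps `∑ b n ^ m ≤ 2`.
  set δ := min 1 (ε / 4)
  set b : ℕ → ℝ := fun n => δ * (1 / 2) ^ n
  set c : ℕ → X := fun n => Classical.epsilon (· ∈ t n)
  have hb0 n : 0 < b n := by positivity
  have hbδ n : b n ≤ δ := mul_le_of_le_one_right (by positivity)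
    (pow_le_one₀ (by norm_num) (by norm_num))
  have hcover : s ⊆ ⋃ n, ball (c n) (diam (t n) + b n) := by
    intro x hx
    obtain ⟨n, hxn⟩ := mem_iUnion.1 (hst hx)
    have hdist : dist x (c n) ≤ diam (t n) :=
      dist_le_diam_of_mem' (hdiam_ne n) hxn (Classical.epsilon_spec ⟨x, hxn⟩)
    exact mem_iUnion.2 ⟨n, mem_ball.2 (by linarith [hb0 n])⟩
  obtain ⟨F, hF⟩ := hs.elim_finite_subcover _ (fun n => isOpen_ball) hcover
  refine ⟨F, c, fun n => diam (t n) + b n, fun i _ => ⟨?_, ?_⟩, by simpa using hF, ?_⟩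
  · linarith [hb0 i, diam_nonneg (s := t i)]
  · have : diam (t i) ≤ ε / 2 := ENNReal.toReal_le_of_le_ofReal (by positivity) (hdiam i)
    linarith [hbδ i, min_le_right 1 (ε / 4)]
  have hsum_diam : ∑ i ∈ F, diam (t i) ^ m ≤ H.toReal := by
    rw [← ENNReal.ofReal_le_iff_le_toReal hH,
      ENNReal.ofReal_sum_of_nonneg fun i _ => pow_nonneg diam_nonneg m]
    refine le_trans ?_ ((ENNReal.sum_le_tsum F).trans hsum.le)
    refine F.sum_le_sum fun i _ => ?_
    rcases (t i).eq_empty_or_nonempty with hti | hti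
    · simp [hti, zero_pow (by omega : m ≠ 0)]
    · rw [iSup_pos hti, ENNReal.rpow_natCast, ENNReal.ofReal_pow diam_nonneg]
      exact pow_le_pow_left' ENNReal.ofReal_toReal_le m
  calc ∑ i ∈ F, (diam (t i) + b i) ^ m
      ≤ ∑ i ∈ F, 2 ^ (m - 1) * (diam (t i) ^ m + b i ^ m) :=
        F.sum_le_sum fun i _ => add_pow_le diam_nonneg (hb0 i).le m
    _ = 2 ^ (m - 1) * (∑ i ∈ F, diam (t i) ^ m + ∑ i ∈ F, b i ^ m) := by
        rw [← Finset.mul_sum, Finset.sum_add_distrib]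
    _ ≤ 2 ^ (m - 1) * (H.toReal + 2) := by
        gcongr
        exact sum_geometric_mul_pow_le hm (by positivity) (min_le_left _ _) F

end Cover

section Cutoff

variable {E : Type*} [NormedAddCommGroup E] [NormedSpace ℝ E]

lemma norm_fderiv_finset_prod_le {ι : Type*} {F : Finset ι} {f : ι → E → ℝ} {x : E}
    (hf : ∀ i ∈ F, DifferentiableAt ℝ (f i) x) (hf1 : ∀ i ∈ F, |f i x| ≤ 1) :
    ‖fderiv ℝ (fun y => ∏ i ∈ F, f i y) x‖ ≤ ∑ i ∈ F, ‖fderiv ℝ (f i) x‖ := by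
  classical
  rw [(HasFDerivAt.finsetProd fun i hi => (hf i hi).hasFDerivAt).fderiv]
  refine (norm_sum_le _ _).trans (F.sum_le_sum fun i _ => ?_)
  rw [norm_smul, norm_prod]
  exact mul_le_of_le_one_left (norm_nonneg _)
    (Finset.prod_le_one (fun _ _ => norm_nonneg _) fun j hj => hf1 j (F.mem_of_mem_erase hj))

variable [HasContDiffBump E]

variable (E) in
def unitBump : ContDiffBump (0 : E) := ⟨1, 2, one_pos, one_lt_two⟩

def scaledBump (c : E) (r : ℝ) (x : E) : ℝ := unitBump E (r⁻¹ • (x - c))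

lemma contDiff_scaledBump (c : E) (r : ℝ) : ContDiff ℝ 1 (scaledBump c r) :=
  (unitBump E).contDiff.comp ((contDiff_id.sub contDiff_const).const_smul r⁻¹)

lemma scaledBump_nonneg (c : E) (r : ℝ) (x : E) : 0 ≤ scaledBump c r x := (unitBump E).nonneg

lemma scaledBump_le_one (c : E) (r : ℝ) (x : E) : scaledBump c r x ≤ 1 := (unitBump E).le_one

lemma scaledBump_eq_one (c : E) {r : ℝ} (hr : 0 < r) {x : E} (hx : x ∈ closedBall c r) :
    scaledBump c r x = 1 := by
  refine (unitBump E).one_of_mem_closedBall ?_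
  rw [mem_closedBall, dist_eq_norm] at hx
  rw [mem_closedBall, dist_zero_right, norm_smul, norm_inv, Real.norm_of_nonneg hr.le]
  exact inv_mul_le_one_of_le₀ hx hr.le

lemma tsupport_scaledBump_subset (c : E) {r : ℝ} (hr : 0 < r) :
    tsupport (scaledBump c r) ⊆ closedBall c (2 * r) := by
  refine closure_minimal (fun x hx => ?_) isClosed_closedBall
  have := (unitBump E).support_eq.subset hx
  rw [mem_ball, dist_zero_right, norm_smul, norm_inv, Real.norm_of_nonneg hr.le,
    inv_mul_lt_iff₀ hr, show (unitBump E).rOut = 2 from rfl] at this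
  rw [mem_closedBall, dist_eq_norm]
  linarith

lemma exists_norm_fderiv_scaledBump_le [FiniteDimensional ℝ E] :
    ∃ C, 0 ≤ C ∧ ∀ (c : E) (r : ℝ), 0 < r → ∀ x, ‖fderiv ℝ (scaledBump c r) x‖ ≤ C / r := by
  obtain ⟨C, hC⟩ := (unitBump E).hasCompactSupport.fderiv (𝕜 := ℝ) |>.exists_bound_of_continuous
    ((unitBump E).contDiff (n := 1).continuous_fderiv one_ne_zero)
  have hC0 : 0 ≤ C := (norm_nonneg _).trans (hC 0)
  refine ⟨C, hC0, fun c r hr x => ?_⟩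
  have hlin : HasFDerivAt (fun x : E => r⁻¹ • (x - c)) (r⁻¹ • ContinuousLinearMap.id ℝ E) x :=
    ((hasFDerivAt_id x).sub_const c).const_smul r⁻¹
  have hbump :=
    ((unitBump E).contDiff (n := 1).differentiable one_ne_zero _).hasFDerivAt.comp x hlin
  rw [show scaledBump c r = unitBump E ∘ fun x => r⁻¹ • (x - c) from rfl, hbump.fderiv,
    div_eq_mul_inv]
  refine (ContinuousLinearMap.opNorm_comp_le _ _).trans
    (mul_le_mul (hC _) ((norm_smul_le _ _).trans ?_) (norm_nonneg _) hC0)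
  rw [norm_inv, Real.norm_of_nonneg hr.le]
  exact mul_le_of_le_one_right (by positivity) ContinuousLinearMap.norm_id_le

def ballsCutoff {ι : Type*} (F : Finset ι) (c : ι → E) (r : ι → ℝ) (x : E) : ℝ :=
  ∏ i ∈ F, (1 - scaledBump (c i) (r i) x)

variable {ι : Type*} {F : Finset ι} {c : ι → E} {r : ι → ℝ}

lemma contDiff_ballsCutoff : ContDiff ℝ 1 (ballsCutoff F c r) :=
  contDiff_prod fun _ _ => contDiff_const.sub (contDiff_scaledBump _ _)

lemma ballsCutoff_nonneg (x : E) : 0 ≤ ballsCutoff F c r x :=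
  Finset.prod_nonneg fun _ _ => sub_nonneg.2 (scaledBump_le_one _ _ x)

lemma ballsCutoff_le_one (x : E) : ballsCutoff F c r x ≤ 1 :=
  Finset.prod_le_one (fun _ _ => sub_nonneg.2 (scaledBump_le_one _ _ x))
    fun _ _ => sub_le_self _ (scaledBump_nonneg _ _ x)

lemma ballsCutoff_eq_zero {i : ι} (hi : i ∈ F) (hr : 0 < r i) {x : E}
    (hx : x ∈ ball (c i) (r i)) : ballsCutoff F c r x = 0 :=
  Finset.prod_eq_zero hi (by rw [scaledBump_eq_one _ hr (ball_subset_closedBall hx), sub_self])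

lemma abs_one_sub_ballsCutoff_le (hr : ∀ i ∈ F, 0 < r i) (x : E) :
    |1 - ballsCutoff F c r x| ≤ ∑ i ∈ F, (closedBall (c i) (2 * r i)).indicator 1 x := by
  have hsum_nonneg : 0 ≤ ∑ i ∈ F, (closedBall (c i) (2 * r i)).indicator (1 : E → ℝ) x :=
    Finset.sum_nonneg fun i _ => indicator_nonneg (fun _ _ => zero_le_one) x
  by_cases hx : ∃ i ∈ F, x ∈ closedBall (c i) (2 * r i)
  · obtain ⟨i, hi, hxi⟩ := hx
    calc |1 - ballsCutoff F c r x| ≤ 1 := by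
          rw [abs_of_nonneg (sub_nonneg.2 (ballsCutoff_le_one x))]
          linarith [ballsCutoff_nonneg (F := F) (c := c) (r := r) x]
      _ = (closedBall (c i) (2 * r i)).indicator 1 x := (indicator_of_mem hxi 1).symm
      _ ≤ _ := Finset.single_le_sum (f := fun j => (closedBall (c j) (2 * r j)).indicator 1 x)
          (fun _ _ => indicator_nonneg (fun _ _ => zero_le_one) x) hi
  · push Not at hx
    have hone : ballsCutoff F c r x = 1 := Finset.prod_eq_one fun i hi => by
      rw [image_eq_zero_of_notMem_tsupport
        (fun h => hx i hi (tsupport_scaledBump_subset _ (hr i hi) h)), sub_zero]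
    rwa [hone, sub_self, abs_zero]

lemma norm_fderiv_ballsCutoff_le {C : ℝ}
    (hC : ∀ (c : E) (r : ℝ), 0 < r → ∀ x, ‖fderiv ℝ (scaledBump c r) x‖ ≤ C / r)
    (hr : ∀ i ∈ F, 0 < r i) (x : E) :
    ‖fderiv ℝ (ballsCutoff F c r) x‖ ≤
      ∑ i ∈ F, C / r i * (closedBall (c i) (2 * r i)).indicator 1 x := by
  refine (norm_fderiv_finset_prod_le (f := fun i y => 1 - scaledBump (c i) (r i) y)
    (fun _ _ => (differentiableAt_const _).sub
      ((contDiff_scaledBump _ _).differentiable one_ne_zero x))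
    fun _ _ => ?_).trans (F.sum_le_sum fun i hi => ?_)
  · rw [abs_of_nonneg (sub_nonneg.2 (scaledBump_le_one _ _ x))]
    exact sub_le_self _ (scaledBump_nonneg _ _ x)
  rw [fderiv_const_sub, norm_neg]
  by_cases hx : x ∈ closedBall (c i) (2 * r i)
  · rw [indicator_of_mem hx, Pi.one_apply, mul_one]
    exact hC _ _ (hr i hi) x
  · rw [indicator_of_notMem hx, mul_zero, fderiv_of_notMem_tsupport ℝ
      (fun h => hx (tsupport_scaledBump_subset _ (hr i hi) h)), norm_zero]

end Cutoff

section ExtensionByZero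

variable {E F : Type*} {Ω V : Set E} {f : E → F}

lemma indicator_eventuallyEq_of_mem [TopologicalSpace E] [Zero F] (hΩ : IsOpen Ω) {x : E}
    (hx : x ∈ Ω) : Ω.indicator f =ᶠ[𝓝 x] f := by
  filter_upwards [hΩ.mem_nhds hx] with y hy using indicator_of_mem hy f

lemma indicator_eventuallyEq_zero_of_notMem [TopologicalSpace E] [Zero F] (hΩ : IsOpen Ω)
    (hV : IsOpen V) (hfr : frontier Ω ⊆ V) (hfV : EqOn f 0 V) {x : E} (hx : x ∉ Ω) :
    Ω.indicator f =ᶠ[𝓝 x] 0 := by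
  have hxV : x ∈ V ∪ (closure Ω)ᶜ := by
    by_contra h
    simp only [mem_union, mem_compl_iff, not_or, not_not] at h
    exact h.1 (hfr ⟨h.2, by rwa [hΩ.interior_eq]⟩)
  filter_upwards [(hV.union isClosed_closure.isOpen_compl).mem_nhds hxV] with y hy
  rcases hy with hy | hy
  · exact indicator_apply_eq_zero.2 fun _ => hfV hy
  · exact indicator_of_notMem (fun h => hy (subset_closure h)) f

lemma tsupport_indicator_subset_of_eqOn_zero [TopologicalSpace E] [Zero F] (hΩ : IsOpen Ω)
    (hV : IsOpen V) (hfr : frontier Ω ⊆ V) (hfV : EqOn f 0 V) : tsupport (Ω.indicator f) ⊆ Ω :=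
  fun _ hx => by_contra fun h =>
    notMem_tsupport_iff_eventuallyEq.2 (indicator_eventuallyEq_zero_of_notMem hΩ hV hfr hfV h) hx

lemma contDiff_indicator_of_eqOn_zero [NormedAddCommGroup E] [NormedSpace ℝ E]
    [NormedAddCommGroup F] [NormedSpace ℝ F] {n : WithTop ℕ∞} (hΩ : IsOpen Ω) (hV : IsOpen V)
    (hfr : frontier Ω ⊆ V) (hf : ContDiff ℝ n f) (hfV : EqOn f 0 V) :
    ContDiff ℝ n (Ω.indicator f) := by
  refine contDiff_iff_contDiffAt.2 fun x => ?_
  by_cases hx : x ∈ Ω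
  · exact hf.contDiffAt.congr_of_eventuallyEq (indicator_eventuallyEq_of_mem hΩ hx)
  · exact contDiffAt_const.congr_of_eventuallyEq
      (indicator_eventuallyEq_zero_of_notMem hΩ hV hfr hfV hx)

end ExtensionByZero

lemma MeasureTheory.MemLp.exists_ae_norm_le {α F : Type*} [MeasurableSpace α] {μ : Measure α}
    [NormedAddCommGroup F] {f : α → F} (hf : MemLp f ∞ μ) :
    ∃ L : NNReal, ∀ᵐ x ∂μ, ‖f x‖ ≤ L := by
  obtain ⟨L, hL⟩ := (eLpNormEssSup_lt_top_iff_isBoundedUnder.1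
    (by simpa [eLpNorm_exponent_top] using hf.eLpNorm_lt_top)).eventually_le
  exact ⟨L, hL.mono fun x hx => by exact_mod_cast hx⟩

lemma setIntegral_mul_le_of_abs_le {α : Type*} [MeasurableSpace α] {μ : Measure α} {s : Set α}
    {u φ Φ : α → ℝ} {L : ℝ} (hL : 0 ≤ L) (hu : ∀ᵐ x ∂μ.restrict s, |u x| ≤ L)
    (hφ : ∀ᵐ x ∂μ.restrict s, |φ x| ≤ Φ x) (hΦ : Integrable Φ μ) (hΦ0 : 0 ≤ Φ) :
    ∫ x in s, u x * φ x ∂μ ≤ L * ∫ x, Φ x ∂μ :=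
  calc ∫ x in s, u x * φ x ∂μ ≤ ‖∫ x in s, u x * φ x ∂μ‖ := le_abs_self _
    _ ≤ ∫ x in s, L * Φ x ∂μ := by
      refine norm_integral_le_of_norm_le (hΦ.integrableOn.const_mul L) ?_
      filter_upwards [hu, hφ] with x hux hφx
      rw [norm_mul]
      exact mul_le_mul hux hφx (abs_nonneg _) hL
    _ ≤ ∫ x, L * Φ x ∂μ :=
      setIntegral_le_integral (hΦ.const_mul L) (.of_forall fun x => mul_nonneg hL (hΦ0 x))
    _ = L * ∫ x, Φ x ∂μ := integral_const_mul L Φ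

lemma sum_mul_measureReal_closedBall_le {E : Type*} [NormedAddCommGroup E] [NormedSpace ℝ E]
    [MeasurableSpace E] [BorelSpace E] [FiniteDimensional ℝ E] (μ : Measure E)
    [μ.IsAddHaarMeasure] (hE : 1 ≤ Module.finrank ℝ E) {ι : Type*} {F : Finset ι} {c : ι → E}
    {r : ι → ℝ} {ε K C M : ℝ} (hε : 0 ≤ ε) (hK : 0 ≤ K) (hC : 0 ≤ C)
    (hr : ∀ i ∈ F, 0 < r i ∧ r i < ε)
    (hM : ∑ i ∈ F, r i ^ (Module.finrank ℝ E - 1) ≤ M) :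
    ∑ i ∈ F, (K + C / r i) * μ.real (closedBall (c i) (2 * r i)) ≤
      2 ^ Module.finrank ℝ E * μ.real (ball 0 1) * (K * ε + C) * M := by
  obtain ⟨n, hn⟩ : ∃ n, Module.finrank ℝ E = n + 1 := ⟨_, (Nat.sub_add_cancel hE).symm⟩
  rw [hn, Nat.add_sub_cancel] at hM
  rw [hn]
  calc ∑ i ∈ F, (K + C / r i) * μ.real (closedBall (c i) (2 * r i))
      = ∑ i ∈ F, 2 ^ (n + 1) * μ.real (ball 0 1) * (K * r i + C) * r i ^ n := by
        refine F.sum_congr rfl fun i hi => ?_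
        have hri := (hr i hi).1
        rw [μ.addHaar_real_closedBall _ (by positivity), hn, mul_pow, pow_succ (r i)]
        field_simp
    _ ≤ ∑ i ∈ F, 2 ^ (n + 1) * μ.real (ball 0 1) * (K * ε + C) * r i ^ n := by
        refine F.sum_le_sum fun i hi => ?_
        have hri := hr i hi
        have := hri.1.le
        gcongr
        exact hri.2.le
    _ ≤ 2 ^ (n + 1) * μ.real (ball 0 1) * (K * ε + C) * M := by
        rw [← Finset.mul_sum]
        have : 0 ≤ K * ε + C := by positivity
        gcongr

section Divergence

variable {N : ℕ}

lemma divg_congr {f g : RN N → RN N} {x : RN N} (h : f =ᶠ[𝓝 x] g) : divg f x = divg g x := by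
  simp only [divg, h.fderiv_eq]

lemma continuous_divg {g : RN N → RN N} (hg : ContDiff ℝ 1 g) : Continuous (divg g) := by
  have := hg.continuous_fderiv one_ne_zero
  unfold divg
  fun_prop

lemma hasCompactSupport_divg {g : RN N → RN N} (hg : HasCompactSupport g) :
    HasCompactSupport (divg g) :=
  (hg.fderiv (𝕜 := ℝ)).comp_left
    (g := fun A : RN N →L[ℝ] RN N => ∑ i, A (EuclideanSpace.single i 1) i) (by simp)

lemma divg_smul {η : RN N → ℝ} {g : RN N → RN N} {x : RN N} (hη : DifferentiableAt ℝ η x)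
    (hg : DifferentiableAt ℝ g x) :
    divg (fun y => η y • g y) x = η x * divg g x + fderiv ℝ η x (g x) := by
  have hexp : g x = ∑ i, g x i • EuclideanSpace.single i (1 : ℝ) := by
    simpa using ((EuclideanSpace.basisFun (Fin N) ℝ).sum_repr (g x)).symm
  conv_rhs => rw [hexp]
  simp [divg, fderiv_fun_smul hη hg, Finset.mul_sum, Finset.sum_add_distrib, mul_comm]

end Divergence

section TotalVariation

variable {N : ℕ} {Ω : Set (RN N)} {u : RN N → ℝ} {g : RN N → RN N}

def IsTestField (Ω : Set (RN N)) (g : RN N → RN N) : Prop :=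
  ContDiff ℝ 1 g ∧ HasCompactSupport g ∧ tsupport g ⊆ Ω ∧ ∀ x, ‖g x‖ ≤ 1

lemma IsTestField.ofReal_setIntegral_le_totVar (hg : IsTestField Ω g) :
    ENNReal.ofReal (∫ x in Ω, u x * divg g x) ≤ totVar u Ω :=
  le_iSup_of_le g <| le_iSup_of_le hg.1 <| le_iSup_of_le hg.2.1 <| le_iSup_of_le hg.2.2.1 <|
    le_iSup_of_le hg.2.2.2 le_rfl

lemma totVar_le_ofReal {B : ℝ} (hB : ∀ g, IsTestField Ω g → ∫ x in Ω, u x * divg g x ≤ B) :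
    totVar u Ω ≤ ENNReal.ofReal B :=
  iSup_le fun g => iSup_le fun hC => iSup_le fun hs => iSup_le fun hts => iSup_le fun hb =>
    ENNReal.ofReal_le_ofReal (hB g ⟨hC, hs, hts, hb⟩)

lemma IsTestField.integrableOn_mul_divg (hg : IsTestField Ω g) (hu : IntegrableOn u Ω) :
    IntegrableOn (fun x => u x * divg g x) Ω := by
  obtain ⟨K, hK⟩ := (hasCompactSupport_divg hg.2.1).exists_bound_of_continuous
    (continuous_divg hg.1)
  exact hu.mul_bdd (continuous_divg hg.1).aestronglyMeasurable (ae_of_all _ hK)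

variable {ι : Type*} {F : Finset ι} {c : ι → RN N} {r : ι → ℝ} {K C : ℝ}

lemma isTestField_indicator_ballsCutoff_smul (hΩo : IsOpen Ω) (hΩb : Bornology.IsBounded Ω)
    (hg : ContDiff ℝ 1 g) (hgb : ∀ x, ‖g x‖ ≤ 1) (hr : ∀ i ∈ F, 0 < r i)
    (hcov : frontier Ω ⊆ ⋃ i ∈ F, ball (c i) (r i)) :
    IsTestField Ω (Ω.indicator fun y => ballsCutoff F c r y • g y) := by
  have hV : IsOpen (⋃ i ∈ F, ball (c i) (r i)) := isOpen_biUnion fun _ _ => isOpen_ball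
  have hηV : EqOn (fun y => ballsCutoff F c r y • g y) 0 (⋃ i ∈ F, ball (c i) (r i)) :=
    fun y hy => by
      obtain ⟨i, hi, hyi⟩ := mem_iUnion₂.1 hy
      simp [ballsCutoff_eq_zero hi (hr i hi) hyi]
  have hts := tsupport_indicator_subset_of_eqOn_zero hΩo hV hcov hηV
  refine ⟨contDiff_indicator_of_eqOn_zero hΩo hV hcov (contDiff_ballsCutoff.smul hg) hηV,
    hΩb.isCompact_closure.of_isClosed_subset (isClosed_tsupport _) (hts.trans subset_closure),
    hts, fun x => (norm_indicator_le_norm_self _ x).trans ?_⟩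
  rw [norm_smul, Real.norm_of_nonneg (ballsCutoff_nonneg x)]
  exact mul_le_one₀ (ballsCutoff_le_one x) (norm_nonneg _) (hgb x)

lemma abs_divg_sub_divg_ballsCutoff_smul_le {x : RN N} (hg : DifferentiableAt ℝ g x)
    (hgx : ‖g x‖ ≤ 1) (hKx : |divg g x| ≤ K)
    (hC : ∀ (c : RN N) (r : ℝ), 0 < r → ∀ x, ‖fderiv ℝ (scaledBump c r) x‖ ≤ C / r)
    (hr : ∀ i ∈ F, 0 < r i) :
    |divg g x - divg (fun y => ballsCutoff F c r y • g y) x| ≤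
      ∑ i ∈ F, (K + C / r i) * (closedBall (c i) (2 * r i)).indicator 1 x := by
  set η := ballsCutoff F c r
  have hDη : |fderiv ℝ η x (g x)| ≤ ‖fderiv ℝ η x‖ :=
    ((fderiv ℝ η x).le_opNorm (g x)).trans (mul_le_of_le_one_right (norm_nonneg _) hgx)
  rw [divg_smul ((contDiff_ballsCutoff.differentiable one_ne_zero) x) hg]
  calc |divg g x - (η x * divg g x + fderiv ℝ η x (g x))|
      = |(1 - η x) * divg g x - fderiv ℝ η x (g x)| := by ring_nf
    _ ≤ |1 - η x| * K + ‖fderiv ℝ η x‖ := by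
      refine (abs_sub _ _).trans (add_le_add ?_ hDη)
      rw [abs_mul]
      exact mul_le_mul_of_nonneg_left hKx (abs_nonneg _)
    _ ≤ (∑ i ∈ F, (closedBall (c i) (2 * r i)).indicator 1 x) * K +
        ∑ i ∈ F, C / r i * (closedBall (c i) (2 * r i)).indicator 1 x := by
      gcongr
      · exact (abs_nonneg _).trans hKx
      · exact abs_one_sub_ballsCutoff_le hr x
      · exact norm_fderiv_ballsCutoff_le hC hr x
    _ = _ := by rw [Finset.sum_mul, ← Finset.sum_add_distrib]; simp only [add_mul, mul_comm]

lemma integral_sum_mul_indicator_closedBall :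
    ∫ x, ∑ i ∈ F, (K + C / r i) * (closedBall (c i) (2 * r i)).indicator 1 x =
      ∑ i ∈ F, (K + C / r i) * volume.real (closedBall (c i) (2 * r i)) := by
  rw [integral_finsetSum F fun i _ => ((integrable_indicator_iff measurableSet_closedBall).2
    (integrableOn_const measure_closedBall_lt_top.ne)).const_mul _]
  simp only [integral_const_mul, integral_indicator_one measurableSet_closedBall]

theorem setIntegral_mul_divg_le (hΩo : IsOpen Ω) (hΩb : Bornology.IsBounded Ω)
    (hu : IntegrableOn u Ω) {L : ℝ} (hL : 0 ≤ L) (huL : ∀ᵐ x ∂volume.restrict Ω, |u x| ≤ L)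
    (hvar : totVar u Ω ≠ ⊤) (hg : ContDiff ℝ 1 g) (hgb : ∀ x, ‖g x‖ ≤ 1)
    (hK : ∀ x, |divg g x| ≤ K)
    (hC : ∀ (c : RN N) (r : ℝ), 0 < r → ∀ x, ‖fderiv ℝ (scaledBump c r) x‖ ≤ C / r)
    (hr : ∀ i ∈ F, 0 < r i) (hcov : frontier Ω ⊆ ⋃ i ∈ F, ball (c i) (r i)) :
    ∫ x in Ω, u x * divg g x ≤ (totVar u Ω).toReal +
      L * ∑ i ∈ F, (K + C / r i) * volume.real (closedBall (c i) (2 * r i)) := by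
  set h := Ω.indicator fun y => ballsCutoff F c r y • g y
  have hh : IsTestField Ω h := isTestField_indicator_ballsCutoff_smul hΩo hΩb hg hgb hr hcov
  set Φ : RN N → ℝ :=
    fun x => ∑ i ∈ F, (K + C / r i) * (closedBall (c i) (2 * r i)).indicator 1 x
  have hΦ : Integrable Φ := integrable_finsetSum F fun i _ =>
    ((integrable_indicator_iff measurableSet_closedBall).2
      (integrableOn_const measure_closedBall_lt_top.ne)).const_mul _
  have hΦ0 : 0 ≤ Φ := fun x => Finset.sum_nonneg fun i hi => by
    have := hr i hi
    have : 0 ≤ K := (abs_nonneg _).trans (hK 0)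
    have : 0 ≤ C := by simpa using (norm_nonneg _).trans (hC 0 1 one_pos 0)
    exact mul_nonneg (by positivity) (indicator_nonneg (fun _ _ => zero_le_one) x)
  have hdiff : ∀ᵐ x ∂volume.restrict Ω, |divg g x - divg h x| ≤ Φ x := by
    filter_upwards [ae_restrict_mem hΩo.measurableSet] with x hx
    rw [divg_congr (indicator_eventuallyEq_of_mem hΩo hx)]
    exact abs_divg_sub_divg_ballsCutoff_smul_le ((hg.differentiable one_ne_zero) x) (hgb x)
      (hK x) hC hr
  have hint_g := hu.mul_bdd (continuous_divg hg).aestronglyMeasurable (ae_of_all _ hK)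
  calc ∫ x in Ω, u x * divg g x
      = (∫ x in Ω, u x * divg h x) + ∫ x in Ω, u x * (divg g x - divg h x) := by
        simp_rw [mul_sub]
        rw [integral_sub hint_g (hh.integrableOn_mul_divg hu)]
        ring
    _ ≤ (totVar u Ω).toReal + L * ∫ x, Φ x :=
        add_le_add ((ENNReal.ofReal_le_iff_le_toReal hvar).1 hh.ofReal_setIntegral_le_totVar)
          (setIntegral_mul_le_of_abs_le hL huL hdiff hΦ hΦ0)
    _ = _ := by rw [integral_sum_mul_indicator_closedBall]

end TotalVariation

theorem extension_Linfty_finite_boundary_general (N : ℕ) (hN : 2 ≤ N) (Ω : Set (RN N))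
    (hΩo : IsOpen Ω) (hΩb : Bornology.IsBounded Ω)
    (hb : μH[(N : ℝ) - 1] (frontier Ω) < ⊤)
    (u : RN N → ℝ) (hu0 : ∀ x ∉ Ω, u x = 0)
    (huL : MemLp u ⊤ (volume.restrict Ω)) (hvar : totVar u Ω < ⊤) :
    Integrable u volume ∧ totVar u univ < ⊤ := by
  have : IsFiniteMeasure (volume.restrict Ω) := isFiniteMeasure_restrict.2 hΩb.measure_lt_top.ne
  have hu : IntegrableOn u Ω := huL.integrable le_top
  refine ⟨?_, ?_⟩
  · rw [← indicator_eq_self.2 fun x hx => by_contra fun h => hx (hu0 x h)]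
    exact (integrable_indicator_iff hΩo.measurableSet).2 hu
  obtain ⟨L, hL⟩ := huL.exists_ae_norm_le
  obtain ⟨C, hC0, hC⟩ := exists_norm_fderiv_scaledBump_le (E := RN N)
  obtain ⟨M, hM⟩ := exists_finite_ball_cover_sum_pow_le (m := N - 1) (by omega)
    (hΩb.isCompact_closure.of_isClosed_subset isClosed_frontier frontier_subset_closure)
    (by rwa [Nat.cast_sub (by omega : 1 ≤ N), Nat.cast_one])
  set v := volume.real (ball (0 : RN N) 1)
  refine (totVar_le_ofReal (B := (totVar u Ω).toReal + L * (2 ^ N * v * C * M))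
    fun g ⟨hg, hgs, _, hgb⟩ => ?_).trans_lt ofReal_lt_top
  rw [Measure.restrict_univ, ← setIntegral_eq_integral_of_forall_compl_eq_zero
    fun x hx => by rw [hu0 x hx, zero_mul]]
  obtain ⟨K, hK⟩ := (hasCompactSupport_divg hgs).exists_bound_of_continuous (continuous_divg hg)
  -- Let the radii of the cover of `∂Ω` tend to `0`.
  refine ge_of_tendsto (x := 𝓝[>] (0 : ℝ))
    (f := fun ε => (totVar u Ω).toReal + L * (2 ^ N * v * (K * ε + C) * M))
    (((by fun_prop : Continuous _).tendsto' 0 _ (by simp)).mono_left nhdsWithin_le_nhds)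
    (eventually_nhdsWithin_of_forall fun ε hε => ?_)
  obtain ⟨F, c, r, hr, hcov, hsum⟩ := hM ε hε
  refine (setIntegral_mul_divg_le hΩo hΩb hu L.2 (hL.mono fun x hx => by rwa [← Real.norm_eq_abs])
    hvar.ne hg hgb (by simpa using hK) hC (fun i hi => (hr i hi).1) hcov).trans
    (add_le_add_right (mul_le_mul_of_nonneg_left ?_ L.2) _)
  have hK0 : 0 ≤ K := (norm_nonneg _).trans (hK 0)
  simpa using sum_mul_measureReal_closedBall_le (E := RN N) (c := c) (M := M) volume
    (by rw [finrank_euclideanSpace_fin]; omega) hε.le hK0 hC0 hr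
    (by rwa [finrank_euclideanSpace_fin])

/-- First case of the proof of Theorem `easycase`: if `ℋ^{N-1}(∂Ω) < ∞` and
`u ∈ L^∞(Ω)` has bounded variation on `Ω`, then `u ∈ BV(ℝ^N)`. -/
theorem extension_Linfty_finite_boundary (N : ℕ) (hN : 2 ≤ N) (Ω : Set (RN N))
    (hΩo : IsOpen Ω) (hΩb : Bornology.IsBounded Ω)
    (hb : μH[(N : ℝ) - 1] (frontier Ω) < ⊤)
    (u : RN N → ℝ) (hum : Measurable u) (hu0 : ∀ x ∉ Ω, u x = 0)
    (huL : MemLp u ⊤ (volume.restrict Ω)) (hvar : totVar u Ω < ⊤) :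
    Integrable u volume ∧ totVar u univ < ⊤ :=
  extension_Linfty_finite_boundary_general N hN Ω hΩo hΩb hb u hu0 huL hvar

end
end

section
/- Let Ω ⊂ ℝ^N be a bounded open set, let u : Ω → ℝ be a Borel function extended to zero outside Ω, and for t ∈ ℝ set Ω^t = {x ∈ Ω : u(x) > t}. Then for every t > 0: {x ∈ ∂Ω : u⁺(x) > t} ⊆ (∂*Ω^t ∪ Ω^t_1) ∩ ∂Ω ⊆ {x ∈ ∂Ω : u⁺(x) ≥ t}, where Ω^t_1 is the set of points at which Ω^t has density 1 and ∂*Ω^t is the essential boundary of Ω^t. -/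
open MeasureTheory Metric Set Filter Topology ENNReal

noncomputable section

/-! As `t > 0` and `u` vanishes off `Ω`, `Ω^t = {u > t}`. The set `∂*Ω^t ∪ Ω^t₁` is exactly the
complement of the points where `{u > t}` has density `0`, and these points are those with
`t` in the set whose infimum defines `u⁺`: it lies above `u⁺` there and, superlevel sets being
monotone in `t`, below `u⁺` elsewhere. -/

theorem HasDensityAt.zero_of_subset {N : ℕ} {E F : Set (RN N)} {x : RN N}
    (hF : HasDensityAt F 0 x) (hEF : E ⊆ F) : HasDensityAt E 0 x := by
  unfold HasDensityAt at hF ⊢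
  rw [ENNReal.ofReal_zero] at hF ⊢
  exact tendsto_of_tendsto_of_tendsto_of_le_of_le tendsto_const_nhds hF (fun _ => zero_le)
    fun ρ => ENNReal.div_le_div_right (measure_mono (inter_subset_inter_left _ hEF)) _

theorem HasDensityAt.not_one_of_zero {N : ℕ} {E : Set (RN N)} {x : RN N}
    (h0 : HasDensityAt E 0 x) : ¬ HasDensityAt E 1 x := fun h1 => by
  simpa using tendsto_nhds_unique h0 h1

theorem essBoundary_union_densityPts_one {N : ℕ} (E : Set (RN N)) :
    essBoundary E ∪ densityPts E 1 = (densityPts E 0)ᶜ := by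
  ext x
  have h01 : HasDensityAt E 0 x → ¬ HasDensityAt E 1 x := HasDensityAt.not_one_of_zero
  simp only [essBoundary, densityPts, mem_union, Set.mem_sdiff, mem_univ, true_and,
    mem_compl_iff, mem_ofPred_eq]
  tauto

theorem apUpper_le_of_hasDensityAt_zero {N : ℕ} {v : RN N → ℝ} {x : RN N} {t : ℝ}
    (h : HasDensityAt {y | v y > t} 0 x) : apUpper v x ≤ t :=
  sInf_le ⟨t, h, rfl⟩

theorem le_apUpper_of_not_hasDensityAt_zero {N : ℕ} {v : RN N → ℝ} {x : RN N} {t : ℝ}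
    (h : ¬ HasDensityAt {y | v y > t} 0 x) : (t : EReal) ≤ apUpper v x := by
  refine le_sInf ?_
  rintro _ ⟨s, hs, rfl⟩
  by_contra! hst
  exact h (hs.zero_of_subset fun y hy => (EReal.coe_lt_coe_iff.mp hst).trans hy)

theorem sep_lt_eq_setOf_lt_of_eq_zero_off {α : Type*} {Ω : Set α} {u : α → ℝ} {t : ℝ}
    (hu0 : ∀ x ∉ Ω, u x = 0) (ht : 0 ≤ t) : {x ∈ Ω | t < u x} = {x | t < u x} := by
  refine Subset.antisymm (fun x hx => hx.2) fun x hx => ⟨?_, hx⟩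
  by_contra hxΩ
  have : t < 0 := hu0 x hxΩ ▸ hx
  linarith

theorem superlevel_boundary_inclusions_general (N : ℕ) (Ω : Set (RN N)) (u : RN N → ℝ)
    (hu0 : ∀ x ∉ Ω, u x = 0) (t : ℝ) (ht : 0 < t) :
    {x ∈ frontier Ω | (t : EReal) < apUpper u x} ⊆
        (essBoundary {x ∈ Ω | t < u x} ∪ densityPts {x ∈ Ω | t < u x} 1) ∩ frontier Ω ∧
      (essBoundary {x ∈ Ω | t < u x} ∪ densityPts {x ∈ Ω | t < u x} 1) ∩ frontier Ω ⊆
        {x ∈ frontier Ω | (t : EReal) ≤ apUpper u x} := by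
  rw [essBoundary_union_densityPts_one, sep_lt_eq_setOf_lt_of_eq_zero_off hu0 ht.le]
  constructor
  · rintro x ⟨hxΩ, hxt⟩
    exact ⟨fun h0 => (apUpper_le_of_hasDensityAt_zero h0).not_gt hxt, hxΩ⟩
  · rintro x ⟨h0, hxΩ⟩
    exact ⟨hxΩ, le_apUpper_of_not_hasDensityAt_zero h0⟩

/-- Inclusion `omegatest`: for `t > 0`,
`{x ∈ ∂Ω : u⁺(x) > t} ⊆ (∂*Ω^t ∪ Ω^t₁) ∩ ∂Ω ⊆ {x ∈ ∂Ω : u⁺(x) ≥ t}`. -/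
theorem superlevel_boundary_inclusions (N : ℕ) (Ω : Set (RN N)) (hΩo : IsOpen Ω)
    (hΩb : Bornology.IsBounded Ω) (u : RN N → ℝ) (hum : Measurable u)
    (hu0 : ∀ x ∉ Ω, u x = 0) (t : ℝ) (ht : 0 < t) :
    {x ∈ frontier Ω | (t : EReal) < apUpper u x} ⊆
        (essBoundary {x ∈ Ω | t < u x} ∪ densityPts {x ∈ Ω | t < u x} 1) ∩ frontier Ω ∧
      (essBoundary {x ∈ Ω | t < u x} ∪ densityPts {x ∈ Ω | t < u x} 1) ∩ frontier Ω ⊆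
        {x ∈ frontier Ω | (t : EReal) ≤ apUpper u x} :=
  superlevel_boundary_inclusions_general N Ω u hu0 t ht
end
end
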